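/- Let 𝔾 = (I,Δ) be a discrete quantum semigroup, 𝔫 a linear functional on F_b(𝔾), and f ∈ F_{b:1}(𝔾×𝔾). Then Δ((𝔫 ⊗̃ id)(f)) = (𝔫 ⊗̃ id ⊗̃ id)((id ⊗̃ Δ)(f)). -/

import Mathlib

/-! For fixed `β, γ, u, v`, the entry `Δ(g)(β, γ)_{uv}` is a finite linear combination
`∑ c_{αij} g(α)_{ij}` of matrix entries of `g`, because only finitely many `Δ^α_{β,γ}` are
nonzero. Applied to `(𝔫 ⊗̃ id)(f)` this gives `∑ c_{αij} 𝔫(f_α^{ij})`; applied slicewise inside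
`(id ⊗̃ Δ)(f)` it gives `𝔫` of `∑ c_{αij} f_α^{ij}`. The slices `f_α^{ij}` lie in `F_b` since
compressing a matrix does not increase its operator norm, so linearity of `𝔫` identifies the two. -/

open scoped Matrix.Norms.L2Operator Kronecker ComplexOrder

namespace DQSG

/-- The matrix algebra `M_k(ℂ)`. -/
abbrev Mat (k : ℕ) : Type := Matrix (Fin k) (Fin k) ℂ

/-- `M_k(ℂ) ⊗ M_l(ℂ)`, realized as matrices indexed by `Fin k × Fin l`. -/
abbrev Mat2 (k l : ℕ) : Type := Matrix (Fin k × Fin l) (Fin k × Fin l) ℂ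

/-- `M_k(ℂ) ⊗ M_l(ℂ) ⊗ M_p(ℂ)`. -/
abbrev Mat3 (k l p : ℕ) : Type :=
  Matrix (Fin k × Fin l × Fin p) (Fin k × Fin l × Fin p) ℂ

/-- The function algebra `F(I)` of an index system `(I, n)`. -/
abbrev FI {I : Type*} (n : I → ℕ) : Type _ := ∀ γ : I, Mat (n γ)

/-- The function algebra `F(I × J)`. -/
abbrev FI2 {I J : Type*} (n : I → ℕ) (m : J → ℕ) : Type _ :=
  ∀ (α : I) (β : J), Mat2 (n α) (m β)

/-- The function algebra `F(I × J × K)`. -/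
abbrev FI3 {I J K : Type*} (n : I → ℕ) (m : J → ℕ) (p : K → ℕ) : Type _ :=
  ∀ (α : I) (β : J) (γ : K), Mat3 (n α) (m β) (p γ)

/-- The subspace `F_b(I)` of bounded functions in `F(I)` (w.r.t. the operator norm). -/
noncomputable def Fb {I : Type*} (n : I → ℕ) : Submodule ℂ (FI n) where
  carrier := {f | ∃ C : ℝ, ∀ γ, ‖f γ‖ ≤ C}
  zero_mem' := ⟨0, fun γ => by simp⟩
  add_mem' := by
    rintro f g ⟨C, hC⟩ ⟨D, hD⟩
    exact ⟨C + D, fun γ => (norm_add_le _ _).trans (add_le_add (hC γ) (hD γ))⟩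
  smul_mem' := by
    rintro c f ⟨C, hC⟩
    exact ⟨‖c‖ * C, fun γ => by
      rw [Pi.smul_apply, norm_smul]
      exact mul_le_mul_of_nonneg_left (hC γ) (norm_nonneg c)⟩

/-- `F_{b:1}(I × J)`: functions bounded in the first variable, for each fixed
second variable. -/
def Fb1 {I J : Type*} {n : I → ℕ} {m : J → ℕ} (f : FI2 n m) : Prop :=
  ∀ β : J, ∃ C : ℝ, ∀ α : I, ‖f α β‖ ≤ C

/-- `F_{b:2}(I × J)`: functions bounded in the second variable, for each fixed
first variable. -/
def Fb2 {I J : Type*} {n : I → ℕ} {m : J → ℕ} (f : FI2 n m) : Prop :=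
  ∀ α : I, ∃ C : ℝ, ∀ β : J, ‖f α β‖ ≤ C

/-- The slice `f_β^{ij} ∈ F(I)` of `f ∈ F(I × J)`,
so that `f(α,β) = Σ_{i,j} f_β^{ij}(α) ⊗ e_β^{ij}`. -/
def slice2 {I J : Type*} {n : I → ℕ} {m : J → ℕ} (f : FI2 n m) (β : J)
    (i j : Fin (m β)) : FI n :=
  fun α => Matrix.of fun k l => f α β (k, i) (l, j)

/-- The slice `f_β^{ij} ∈ F(I)` of `f ∈ F(J × I)`,
so that `f(β,α) = Σ_{i,j} e_β^{ij} ⊗ f_β^{ij}(α)`. -/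
def slice1 {I J : Type*} {n : I → ℕ} {m : J → ℕ} (f : FI2 m n) (β : J)
    (i j : Fin (m β)) : FI n :=
  fun α => Matrix.of fun k l => f β α (i, k) (j, l)

/-- `T ⊗̃ id : F(I × J) → F(I' × J)` for a map `T : F(I) → F(I')`. -/
def tenR {I I' J : Type*} {n : I → ℕ} {n' : I' → ℕ} {m : J → ℕ}
    (T : FI n → FI n') (f : FI2 n m) : FI2 n' m :=
  fun α' β => Matrix.of fun u v => T (slice2 f β u.2 v.2) α' u.1 v.1

/-- `id ⊗̃ T : F(J × I) → F(J × I')` for a map `T : F(I) → F(I')`. -/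
def tenL {I I' J : Type*} {n : I → ℕ} {n' : I' → ℕ} {m : J → ℕ}
    (T : FI n → FI n') (f : FI2 m n) : FI2 m n' :=
  fun β α' => Matrix.of fun u v => T (slice1 f β u.1 v.1) α' u.2 v.2

/-- `T ⊗̃ id : F(I × J) → F(I₁ × I₂ × J)` for a map `T : F(I) → F(I₁ × I₂)`. -/
def tenR2 {I I₁ I₂ J : Type*} {n : I → ℕ} {n₁ : I₁ → ℕ} {n₂ : I₂ → ℕ} {m : J → ℕ}
    (T : FI n → FI2 n₁ n₂) (f : FI2 n m) : FI3 n₁ n₂ m :=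
  fun β₁ β₂ γ => Matrix.of fun u v =>
    T (slice2 f γ u.2.2 v.2.2) β₁ β₂ (u.1, u.2.1) (v.1, v.2.1)

/-- `id ⊗̃ T : F(J × I) → F(J × I₁ × I₂)` for a map `T : F(I) → F(I₁ × I₂)`. -/
def tenL2 {I I₁ I₂ J : Type*} {n : I → ℕ} {n₁ : I₁ → ℕ} {n₂ : I₂ → ℕ} {m : J → ℕ}
    (T : FI n → FI2 n₁ n₂) (f : FI2 m n) : FI3 m n₁ n₂ :=
  fun γ β₁ β₂ => Matrix.of fun u v =>
    T (slice1 f γ u.1 v.1) β₁ β₂ u.2 v.2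

open scoped Classical in
/-- Apply a functional defined on `F_b(I)` to an arbitrary element of `F(I)`,
extended by `0` off `F_b(I)`. -/
noncomputable def apF {I : Type*} {n : I → ℕ} (𝔪 : Fb n →ₗ[ℂ] ℂ) (g : FI n) : ℂ :=
  if h : g ∈ Fb n then 𝔪 ⟨g, h⟩ else 0

/-- `𝔪 ⊗̃ id : F(I × J) → F(J)` for a functional `𝔪` on `F_b(I)`. -/
noncomputable def fTenR {I J : Type*} {n : I → ℕ} {m : J → ℕ}
    (𝔪 : Fb n →ₗ[ℂ] ℂ) (f : FI2 n m) : FI m :=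
  fun β => Matrix.of fun i j => apF 𝔪 (slice2 f β i j)

/-- `id ⊗̃ 𝔪 : F(J × I) → F(J)` for a functional `𝔪` on `F_b(I)`. -/
noncomputable def fTenL {I J : Type*} {n : I → ℕ} {m : J → ℕ}
    (𝔪 : Fb n →ₗ[ℂ] ℂ) (f : FI2 m n) : FI m :=
  fun β => Matrix.of fun i j => apF 𝔪 (slice1 f β i j)

/-- `𝔪 ⊗̃ id ⊗̃ id : F(I × J × K) → F(J × K)` for a functional `𝔪` on `F_b(I)`. -/
noncomputable def fTenR3 {I J K : Type*} {n : I → ℕ} {m : J → ℕ} {p : K → ℕ}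
    (𝔪 : Fb n →ₗ[ℂ] ℂ) (f : FI3 n m p) : FI2 m p :=
  fun β γ => Matrix.of fun u v =>
    apF 𝔪 (fun α => Matrix.of fun k l => f α β γ (k, u) (l, v))

/-- A state on the C*-algebra `F_b(I)`: a positive linear functional with `𝔪(1) = 1`. -/
def IsState {I : Type*} {n : I → ℕ} (𝔪 : Fb n →ₗ[ℂ] ℂ) : Prop :=
  (∀ g : FI n, g ∈ Fb n → 0 ≤ apF 𝔪 (star g * g)) ∧ apF 𝔪 1 = 1

/-- A comultiplication on the index system `(I, n)`, i.e. the structure of a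
discrete quantum semigroup. `D α β γ` is the *-homomorphism
`Δ^α_{β,γ} : M_{n(α)} → M_{n(β)} ⊗ M_{n(γ)}`. -/
structure Comul {I : Type*} (n : I → ℕ) where
  /-- the family of *-homomorphisms `Δ^α_{β,γ}` -/
  D : ∀ α β γ : I, Mat (n α) → Mat2 (n β) (n γ)
  linear : ∀ α β γ, IsLinearMap ℂ (D α β γ)
  map_mul' : ∀ α β γ x y, D α β γ (x * y) = D α β γ x * D α β γ y
  map_star' : ∀ α β γ x, D α β γ (star x) = star (D α β γ x)
  /-- condition (i): `Δ^α_{β,γ}(1) Δ^{α'}_{β,γ}(1) = 0` for `α ≠ α'` -/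
  orth : ∀ β γ α α' : I, α ≠ α' → D α β γ 1 * D α' β γ 1 = 0
  /-- for fixed `β, γ` only finitely many `Δ^α_{β,γ}` are nonzero
  (a consequence of condition (i), included as data) -/
  finite : ∀ β γ : I, {α : I | D α β γ ≠ 0}.Finite
  /-- condition (ii): coassociativity
  `Σ_ω (Δ^ω_{α,β} ⊗ id) ∘ Δ^λ_{ω,γ} = Σ_ω (id ⊗ Δ^ω_{β,γ}) ∘ Δ^λ_{α,ω}`,
  written entrywise. -/
  coassoc : ∀ (lam α β γ : I) (x : Mat (n lam)) (p p' : Fin (n α))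
      (q q' : Fin (n β)) (r r' : Fin (n γ)),
      ∑ᶠ ω : I, D ω α β (Matrix.of fun k l => D lam ω γ x (k, r) (l, r')) (p, q) (p', q')
        = ∑ᶠ ω : I, D ω β γ (Matrix.of fun k l => D lam α ω x (p, k) (p', l)) (q, r) (q', r')

/-- The induced *-homomorphism `Δ : F(I) → F(I × I)`,
`[Δ(f)](β,γ) = Σ_α Δ^α_{β,γ}(f(α))`. -/
noncomputable def Comul.ind {I : Type*} {n : I → ℕ} (C : Comul n) (f : FI n) :
    FI2 n n :=
  fun β γ => ∑ᶠ α : I, C.D α β γ (f α)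

/-- A right invariant mean for a discrete quantum semigroup: a state `𝔪` on
`F_b(𝔾)` with `(𝔪 ⊗̃ id)(Δ f) = 𝔪(f)·1` for all `f ∈ F_b(𝔾)`. -/
def IsRIMean {I : Type*} {n : I → ℕ} (C : Comul n) (𝔪 : Fb n →ₗ[ℂ] ℂ) : Prop :=
  IsState 𝔪 ∧ ∀ f : FI n, f ∈ Fb n →
    fTenR 𝔪 (C.ind f) = fun γ => apF 𝔪 f • (1 : Mat (n γ))

/-- A left invariant mean for a discrete quantum semigroup: a state `𝔪` on
`F_b(𝔾)` with `(id ⊗̃ 𝔪)(Δ f) = 𝔪(f)·1` for all `f ∈ F_b(𝔾)`. -/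
def IsLIMean {I : Type*} {n : I → ℕ} (C : Comul n) (𝔪 : Fb n →ₗ[ℂ] ℂ) : Prop :=
  IsState 𝔪 ∧ ∀ f : FI n, f ∈ Fb n →
    fTenL 𝔪 (C.ind f) = fun γ => apF 𝔪 f • (1 : Mat (n γ))

/-- A *-homomorphism between function algebras: a linear, multiplicative,
star-preserving map. -/
def IsStarHom {I J : Type*} {n : I → ℕ} {m : J → ℕ} (T : FI n → FI m) : Prop :=
  IsLinearMap ℂ T ∧ (∀ f g, T (f * g) = T f * T g) ∧ ∀ f, T (star f) = star (T f)

open scoped Classical in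
/-- Apply a map defined on `F_b(I)` to an arbitrary element of `F(I)`,
extended by `0` off `F_b(I)`. -/
noncomputable def apTb {I J : Type*} {n : I → ℕ} {m : J → ℕ}
    (T : Fb n → FI m) (g : FI n) : FI m :=
  if h : g ∈ Fb n then T ⟨g, h⟩ else 0

/-- `T ⊗̃ id : F_{b:1}(I × J) → F(I' × J)` for a map `T` defined on `F_b(I)`. -/
noncomputable def tenRb {I I' J : Type*} {n : I → ℕ} {n' : I' → ℕ} {m : J → ℕ}
    (T : Fb n → FI n') (f : FI2 n m) : FI2 n' m :=
  fun α' β => Matrix.of fun u v => apTb T (slice2 f β u.2 v.2) α' u.1 v.1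

open scoped Classical in
/-- The canonical embedding `I_α : M_{n(α)} → F(I)` as functions supported at `α`:
`emb α x` is the element of `F(I)` that is `x` at `α` and `0` elsewhere. -/
noncomputable def emb {I : Type*} {n : I → ℕ} (α : I) (x : Mat (n α)) : FI n :=
  Function.update (0 : FI n) α x

/-- The canonical identification `ℂ = M_1(ℂ) → M_1(ℂ) ⊗ M_1(ℂ)` (the identity map). -/
def e11 : Mat 1 → Mat2 1 1 := fun x => Matrix.of fun u v => x u.1 v.1

/-- The C*-algebra `ℓ∞(G)` of bounded complex-valued functions on `G`,
as a subspace of all complex-valued functions. -/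
noncomputable def Fbc (G : Type*) : Submodule ℂ (G → ℂ) where
  carrier := {f | ∃ C : ℝ, ∀ x, ‖f x‖ ≤ C}
  zero_mem' := ⟨0, fun x => by simp⟩
  add_mem' := by
    rintro f g ⟨C, hC⟩ ⟨D, hD⟩
    exact ⟨C + D, fun x => (norm_add_le _ _).trans (add_le_add (hC x) (hD x))⟩
  smul_mem' := by
    rintro c f ⟨C, hC⟩
    exact ⟨‖c‖ * C, fun x => by
      rw [Pi.smul_apply, norm_smul]
      exact mul_le_mul_of_nonneg_left (hC x) (norm_nonneg c)⟩

open scoped Classical in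
/-- Apply a functional defined on `ℓ∞(G)` to an arbitrary function,
extended by `0` off `ℓ∞(G)`. -/
noncomputable def apC {G : Type*} (m : Fbc G →ₗ[ℂ] ℂ) (g : G → ℂ) : ℂ :=
  if h : g ∈ Fbc G then m ⟨g, h⟩ else 0

/-- A state on the C*-algebra `ℓ∞(G)`: a positive linear functional
taking the value `1` at the constant function `1`. -/
def IsCState {G : Type*} (m : Fbc G →ₗ[ℂ] ℂ) : Prop :=
  (∀ g : G → ℂ, g ∈ Fbc G → 0 ≤ apC m (star g * g)) ∧ apC m 1 = 1

end DQSG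

open scoped Matrix

namespace Matrix

variable {𝕜 : Type*} [RCLike 𝕜]

lemma l2_opNorm_one_le {n : Type*} [Fintype n] [DecidableEq n] : ‖(1 : Matrix n n 𝕜)‖ ≤ 1 := by
  rw [cstar_norm_def, map_one, ContinuousLinearMap.one_def]
  exact ContinuousLinearMap.norm_id_le

lemma l2_opNorm_le_one_of_conjTranspose_mul_self_eq_one {m n : Type*} [Fintype m] [Fintype n]
    [DecidableEq n] {E : Matrix m n 𝕜} (hE : Eᴴ * E = 1) : ‖E‖ ≤ 1 := by
  have h : ‖E‖ * ‖E‖ ≤ 1 := by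
    rw [← l2_opNorm_conjTranspose_mul_self, hE]
    exact l2_opNorm_one_le
  nlinarith [norm_nonneg E]

lemma conjTranspose_one_submatrix_mul_one_submatrix {l m : Type*} [Fintype m] [DecidableEq l]
    [DecidableEq m] {e : l → m} (he : Function.Injective e) :
    ((1 : Matrix m m 𝕜).submatrix id e)ᴴ * (1 : Matrix m m 𝕜).submatrix id e = 1 := by
  rw [conjTranspose_submatrix, conjTranspose_one, ← submatrix_mul _ _ _ _ _ Function.bijective_id,
    Matrix.one_mul, submatrix_one _ he]

lemma l2_opNorm_submatrix_le {l m n o : Type*} [Fintype l] [Fintype m] [Fintype n] [Fintype o]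
    [DecidableEq l] [DecidableEq m] [DecidableEq n] [DecidableEq o] (A : Matrix m n 𝕜)
    {r : l → m} {c : o → n} (hr : Function.Injective r) (hc : Function.Injective c) :
    ‖A.submatrix r c‖ ≤ ‖A‖ := by
  set R := (1 : Matrix m m 𝕜).submatrix id r
  set K := (1 : Matrix n n 𝕜).submatrix id c
  have hRK : A.submatrix r c = Rᴴ * A * K := by
    rw [conjTranspose_submatrix, conjTranspose_one]
    calc A.submatrix r c = ((1 : Matrix m m 𝕜) * A * (1 : Matrix n n 𝕜)).submatrix r c := by
          rw [Matrix.one_mul, Matrix.mul_one]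
      _ = _ := by
        rw [submatrix_mul _ _ r id c Function.bijective_id,
          submatrix_mul _ _ r id id Function.bijective_id, submatrix_id_id]
  have hR : ‖Rᴴ‖ ≤ 1 := by
    rw [l2_opNorm_conjTranspose]
    exact l2_opNorm_le_one_of_conjTranspose_mul_self_eq_one
      (conjTranspose_one_submatrix_mul_one_submatrix hr)
  have hK : ‖K‖ ≤ 1 := l2_opNorm_le_one_of_conjTranspose_mul_self_eq_one
    (conjTranspose_one_submatrix_mul_one_submatrix hc)
  calc ‖A.submatrix r c‖ = ‖Rᴴ * A * K‖ := by rw [hRK]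
    _ ≤ ‖Rᴴ‖ * ‖A‖ * ‖K‖ :=
      (l2_opNorm_mul _ _).trans (mul_le_mul_of_nonneg_right (l2_opNorm_mul _ _) (norm_nonneg _))
    _ ≤ 1 * ‖A‖ * 1 := by gcongr
    _ = ‖A‖ := by ring

lemma apply_eq_sum_single_smul {R M m n : Type*} [CommSemiring R] [AddCommMonoid M] [Module R M]
    [Fintype m] [Fintype n] [DecidableEq m] [DecidableEq n] {T : Matrix m n R → M}
    (hT : IsLinearMap R T) (x : Matrix m n R) :
    T x = ∑ p : m × n, x p.1 p.2 • T (single p.1 p.2 1) := by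
  let L := IsLinearMap.mk' T hT
  calc T x = L (∑ p : m × n, x p.1 p.2 • single p.1 p.2 1) := by
        simp only [smul_single, smul_eq_mul, mul_one, Fintype.sum_prod_type,
          ← matrix_eq_sum_single]
        rfl
    _ = _ := by simp only [map_sum, map_smul]; rfl

end Matrix

namespace DQSG

lemma slice2_mem_Fb {I J : Type*} {n : I → ℕ} {m : J → ℕ} {f : FI2 n m} (hf : Fb1 f) (β : J)
    (i j : Fin (m β)) : slice2 f β i j ∈ Fb n := by
  obtain ⟨B, hB⟩ := hf β
  exact ⟨B, fun α => ((f α β).l2_opNorm_submatrix_le (Prod.mk_left_injective i)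
    (Prod.mk_left_injective j)).trans (hB α)⟩

lemma apF_of_mem {I : Type*} {n : I → ℕ} (𝔪 : Fb n →ₗ[ℂ] ℂ) {g : FI n} (hg : g ∈ Fb n) :
    apF 𝔪 g = 𝔪 ⟨g, hg⟩ :=
  dif_pos hg

lemma apF_sum_smul {I ι : Type*} {n : I → ℕ} (𝔪 : Fb n →ₗ[ℂ] ℂ) (s : Finset ι) (c : ι → ℂ)
    {g : ι → FI n} (hg : ∀ i ∈ s, g i ∈ Fb n) :
    apF 𝔪 (∑ i ∈ s, c i • g i) = ∑ i ∈ s, c i * apF 𝔪 (g i) := by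
  have hsum : ∑ i ∈ s, c i • g i ∈ Fb n :=
    Submodule.sum_mem _ fun i hi => Submodule.smul_mem _ _ (hg i hi)
  have hlift : (⟨_, hsum⟩ : Fb n) = ∑ i ∈ s.attach, c i • ⟨g i, hg i i.2⟩ := by
    ext1
    simp only [Submodule.coe_sum, Submodule.coe_smul]
    exact (Finset.sum_attach s fun i => c i • g i).symm
  rw [apF_of_mem 𝔪 hsum, hlift, map_sum, ← Finset.sum_attach s fun i => c i * apF 𝔪 (g i)]
  refine Finset.sum_congr rfl fun i _ => ?_
  rw [map_smul, smul_eq_mul, apF_of_mem 𝔪 (hg i i.2)]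

/-- The indices `(α, i, j)` of the matrix units `e_α^{ij}` on which `Δ(·)(β, γ)` can depend. -/
noncomputable def Comul.unitSupport {I : Type*} {n : I → ℕ} (C : Comul n) (β γ : I) :
    Finset (Σ α : I, Fin (n α) × Fin (n α)) :=
  (C.finite β γ).toFinset.sigma fun _ => Finset.univ

lemma Comul.ind_apply_eq_sum {I : Type*} {n : I → ℕ} (C : Comul n) (g : FI n) (β γ : I)
    (u v : Fin (n β) × Fin (n γ)) :
    C.ind g β γ u v = ∑ x ∈ C.unitSupport β γ,
      C.D x.1 β γ (Matrix.single x.2.1 x.2.2 1) u v * g x.1 x.2.1 x.2.2 := by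
  have hsupp : (Function.support fun α => C.D α β γ (g α)) ⊆ (C.finite β γ).toFinset := by
    intro α hα
    rw [Set.Finite.coe_toFinset]
    exact fun hD => hα (congrFun hD (g α))
  rw [Comul.ind, finsum_eq_sum_of_support_subset _ hsupp, Matrix.sum_apply,
    Comul.unitSupport, Finset.sum_sigma]
  refine Finset.sum_congr rfl fun α _ => ?_
  rw [Matrix.apply_eq_sum_single_smul (C.linear α β γ), Matrix.sum_apply]
  simp only [Matrix.smul_apply, smul_eq_mul, mul_comm]

theorem stmt_3_general {I : Type*} (n : I → ℕ) (C : Comul n)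
    (𝔫 : Fb n →ₗ[ℂ] ℂ) (f : FI2 n n) (hf : Fb1 f) :
    C.ind (fTenR 𝔫 f) = fTenR3 𝔫 (tenL2 C.ind f) := by
  funext β γ
  ext u v
  set c : (Σ α, Fin (n α) × Fin (n α)) → ℂ :=
    fun x => C.D x.1 β γ (Matrix.single x.2.1 x.2.2 1) u v
  have hslices : (fun lam => Matrix.of fun k l => C.ind (slice1 f lam k l) β γ u v)
      = ∑ x ∈ C.unitSupport β γ, c x • slice2 f x.1 x.2.1 x.2.2 := by
    funext lam
    ext k l
    simp only [Comul.ind_apply_eq_sum, Matrix.of_apply, Finset.sum_apply, Matrix.sum_apply,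
      Pi.smul_apply, Matrix.smul_apply, smul_eq_mul]
    rfl
  calc C.ind (fTenR 𝔫 f) β γ u v
        = ∑ x ∈ C.unitSupport β γ, c x * apF 𝔫 (slice2 f x.1 x.2.1 x.2.2) :=
        C.ind_apply_eq_sum _ β γ u v
    _ = apF 𝔫 (∑ x ∈ C.unitSupport β γ, c x • slice2 f x.1 x.2.1 x.2.2) :=
        (apF_sum_smul 𝔫 _ c fun x _ => slice2_mem_Fb hf _ _ _).symm
    _ = fTenR3 𝔫 (tenL2 C.ind f) β γ u v := by rw [← hslices]; rfl

/-- **Lemma 7.** For a discrete quantum semigroup, a linear functional `𝔫` on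
`F_b(𝔾)` and `f ∈ F_{b:1}(𝔾 × 𝔾)`:
`Δ((𝔫 ⊗̃ id)(f)) = (𝔫 ⊗̃ id ⊗̃ id)((id ⊗̃ Δ)(f))`. -/
theorem stmt_3 {I : Type*} (n : I → ℕ) (hn : ∀ γ, 0 < n γ) (C : Comul n)
    (𝔫 : Fb n →ₗ[ℂ] ℂ) (f : FI2 n n) (hf : Fb1 f) :
    C.ind (fTenR 𝔫 f) = fTenR3 𝔫 (tenL2 C.ind f) :=
  stmt_3_general n C 𝔫 f hf

end DQSG
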